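/- The maps Π^• form a cochain projection on the twisted complex: Π^{i+1} ∘ 𝒜^i = 𝒜^i ∘ Π^i for every 0 ≤ i ≤ n−1, and Π^i ∘ Π^i = Π^i for every 0 ≤ i ≤ n. -/

import Mathlib

noncomputable section

/-- `P_{ran S^{i-1}} : Z^i → Z^i` (with `P_{ran S^{-1}} = 0`). -/
def projS {Z : ℕ → Type*}
    [∀ i, NormedAddCommGroup (Z i)] [∀ i, InnerProductSpace ℝ (Z i)]
    (Pran : ∀ i, Z (i + 1) →L[ℝ] Z (i + 1)) : ∀ i, Z i →L[ℝ] Z i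
  | 0 => 0
  | m + 1 => Pran m

/-- The twisted differential `𝒜^i(ω, μ) = (D^i ω − S^i μ, D̃^i μ)`. -/
def twistA {Z Zt : ℕ → Type*}
    [∀ i, NormedAddCommGroup (Z i)] [∀ i, InnerProductSpace ℝ (Z i)]
    [∀ i, NormedAddCommGroup (Zt i)] [∀ i, InnerProductSpace ℝ (Zt i)]
    (D : ∀ i, Z i →L[ℝ] Z (i + 1)) (Dt : ∀ i, Zt i →L[ℝ] Zt (i + 1))
    (S : ∀ i, Zt i →L[ℝ] Z (i + 1)) (i : ℕ) :
    (Z i × Zt i) →L[ℝ] (Z (i + 1) × Zt (i + 1)) :=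
  ((D i).comp (ContinuousLinearMap.fst ℝ (Z i) (Zt i))
      - (S i).comp (ContinuousLinearMap.snd ℝ (Z i) (Zt i))).prod
    ((Dt i).comp (ContinuousLinearMap.snd ℝ (Z i) (Zt i)))

/-- The cochain projection `Π^i : Y^i → Y^i`:
`Π^i(ω,μ) = (P_{(ran S^{i-1})^⊥} ω, T^{i+1} D^i P_{(ran S^{i-1})^⊥} ω)` for `i ≤ J`, and
`Π^i(ω,μ) = (0, P_{ker S^i}(μ + D̃^{i-1} T^i ω))` for `i > J` (the case `i = 0 > J` is
vacuous since `J ≥ 0`). -/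
def piMap {Z Zt : ℕ → Type*}
    [∀ i, NormedAddCommGroup (Z i)] [∀ i, InnerProductSpace ℝ (Z i)]
    [∀ i, NormedAddCommGroup (Zt i)] [∀ i, InnerProductSpace ℝ (Zt i)]
    (D : ∀ i, Z i →L[ℝ] Z (i + 1)) (Dt : ∀ i, Zt i →L[ℝ] Zt (i + 1))
    (Pran : ∀ i, Z (i + 1) →L[ℝ] Z (i + 1)) (Pker : ∀ i, Zt i →L[ℝ] Zt i)
    (T : ∀ i, Z (i + 1) →L[ℝ] Zt i) (J : ℕ) (i : ℕ) :
    (Z i × Zt i) →L[ℝ] (Z i × Zt i) :=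
  if i ≤ J then
    (((ContinuousLinearMap.id ℝ (Z i) - projS Pran i).comp
        (ContinuousLinearMap.fst ℝ (Z i) (Zt i))).prod
      (((T i).comp ((D i).comp (ContinuousLinearMap.id ℝ (Z i) - projS Pran i))).comp
        (ContinuousLinearMap.fst ℝ (Z i) (Zt i))))
  else
    match i with
    | 0 => 0
    | m + 1 =>
      (0 : (Z (m + 1) × Zt (m + 1)) →L[ℝ] Z (m + 1)).prod
        ((Pker (m + 1)).comp
          ((ContinuousLinearMap.snd ℝ (Z (m + 1)) (Zt (m + 1)))
            + ((Dt m).comp (T m)).comp (ContinuousLinearMap.fst ℝ (Z (m + 1)) (Zt (m + 1)))))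

/-!
In degrees `i ≤ J`, `Π` keeps the component of `ω` orthogonal to `ran S^{i-1}` and completes it
by `T D`. Anticommutativity makes `D` map `ran S^{i-1}` into `ran S^i` (and `D̃` map `ker S^i`
into `ker S^{i+1}`), so the first components of `Π 𝒜 y` and `𝒜 Π y` both equal
`P_{(ran S^i)^⊥} D ω`, and the second ones agree after applying the injective `S^{i+1}`.
In degrees `i > J` every `S^i` is onto, hence `S T = id` and `k := D̃ T ω + T D ω` lies in
`ker S^i`; both sides then reduce to `D̃ (P_{ker S^i} μ + k)`. At `i = J` the map `S^J` is
invertible, so `T S = id` and `D̃ T D ω` is already in `ker S^{J+1}`.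
-/

theorem LinearMap.isProj_of_sub_mem_orthogonal {𝕜 E : Type*} [RCLike 𝕜] [NormedAddCommGroup E]
    [InnerProductSpace 𝕜 E] {K : Submodule 𝕜 E} {P : E →L[𝕜] E} (hmem : ∀ x, P x ∈ K)
    (horth : ∀ x, x - P x ∈ Kᗮ) : LinearMap.IsProj K P where
  map_mem := hmem
  map_id x hx := (sub_eq_zero.mp <| Submodule.disjoint_def.mp K.orthogonal_disjoint _
    (K.sub_mem hx (hmem x)) (horth x)).symm

section TwistedComplex

variable {Z Zt : ℕ → Type*}
    [∀ i, NormedAddCommGroup (Z i)] [∀ i, InnerProductSpace ℝ (Z i)]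
    [∀ i, NormedAddCommGroup (Zt i)] [∀ i, InnerProductSpace ℝ (Zt i)]
    {D : ∀ i, Z i →L[ℝ] Z (i + 1)} {Dt : ∀ i, Zt i →L[ℝ] Zt (i + 1)}
    {S : ∀ i, Zt i →L[ℝ] Z (i + 1)}
    {Pran : ∀ i, Z (i + 1) →L[ℝ] Z (i + 1)} {Pker : ∀ i, Zt i →L[ℝ] Zt i}
    {T : ∀ i, Z (i + 1) →L[ℝ] Zt i} {J : ℕ}

theorem twistA_apply (i : ℕ) (ω : Z i) (μ : Zt i) :
    twistA D Dt S i (ω, μ) = (D i ω - S i μ, Dt i μ) := rfl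

theorem piMap_of_le {i : ℕ} (hi : i ≤ J) (ω : Z i) (μ : Zt i) :
    piMap D Dt Pran Pker T J i (ω, μ) =
      (ω - projS Pran i ω, T i (D i (ω - projS Pran i ω))) := by
  simp [piMap, hi]

theorem piMap_succ_of_lt {m : ℕ} (hm : J < m + 1) (ω : Z (m + 1)) (μ : Zt (m + 1)) :
    piMap D Dt Pran Pker T J (m + 1) (ω, μ) = (0, Pker (m + 1) (μ + Dt m (T m ω))) := by
  simp [piMap, Nat.not_le.mpr hm]

theorem D_S_eq_S_neg_Dt (hanti : ∀ i (x : Zt i), S (i + 1) (Dt i x) = -D (i + 1) (S i x))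
    (i : ℕ) (x : Zt i) : D (i + 1) (S i x) = S (i + 1) (-Dt i x) := by
  rw [map_neg, hanti, neg_neg]

theorem S_Dt_eq_zero (hanti : ∀ i (x : Zt i), S (i + 1) (Dt i x) = -D (i + 1) (S i x))
    {i : ℕ} {x : Zt i} (hx : S i x = 0) : S (i + 1) (Dt i x) = 0 := by
  rw [hanti, hx, map_zero, neg_zero]

theorem exists_S_eq_D_projS (hDtDt : ∀ i (x : Zt i), Dt (i + 1) (Dt i x) = 0)
    (hanti : ∀ i (x : Zt i), S (i + 1) (Dt i x) = -D (i + 1) (S i x))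
    (hPran : ∀ i, LinearMap.IsProj (LinearMap.range (S i).toLinearMap) (Pran i))
    (i : ℕ) (x : Z i) : ∃ w, S i w = D i (projS Pran i x) ∧ Dt i w = 0 := by
  cases i with
  | zero => exact ⟨0, by simp [projS], map_zero _⟩
  | succ m =>
    obtain ⟨z, hz⟩ := (hPran m).map_mem x
    refine ⟨-Dt m z, ?_, by rw [map_neg, hDtDt, neg_zero]⟩
    rw [projS, ← hz]
    exact (D_S_eq_S_neg_Dt hanti m z).symm

theorem projS_sub_projS
    (hPran : ∀ i, LinearMap.IsProj (LinearMap.range (S i).toLinearMap) (Pran i))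
    (i : ℕ) (x : Z i) : projS Pran i (x - projS Pran i x) = 0 := by
  cases i with
  | zero => rfl
  | succ m => rw [projS, map_sub, (hPran m).map_id _ ((hPran m).map_mem x), sub_self]

theorem piMap_twistA_of_succ_le (hDD : ∀ i (x : Z i), D (i + 1) (D i x) = 0)
    (hDtDt : ∀ i (x : Zt i), Dt (i + 1) (Dt i x) = 0)
    (hanti : ∀ i (x : Zt i), S (i + 1) (Dt i x) = -D (i + 1) (S i x))
    (hPran : ∀ i, LinearMap.IsProj (LinearMap.range (S i).toLinearMap) (Pran i))
    (hST : ∀ i (x : Z (i + 1)), S i (T i x) = Pran i x) {i : ℕ}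
    (hinj : Function.Injective (S (i + 1))) (hi : i + 1 ≤ J) (y : Z i × Zt i) :
    piMap D Dt Pran Pker T J (i + 1) (twistA D Dt S i y)
      = twistA D Dt S i (piMap D Dt Pran Pker T J i y) := by
  obtain ⟨ω, μ⟩ := y
  obtain ⟨w, hw, -⟩ := exists_S_eq_D_projS hDtDt hanti hPran i ω
  have hPS : ∀ x, Pran i (S i x) = S i x := fun x => (hPran i).map_id _ ⟨x, rfl⟩
  have hDQ : D i (ω - projS Pran i ω) = D i ω - S i w := by rw [map_sub, hw]
  have hQD : D i ω - S i μ - Pran i (D i ω - S i μ) = D i ω - Pran i (D i ω) := by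
    rw [map_sub, hPS]; abel
  obtain ⟨v, hv⟩ := (hPran i).map_mem (D i ω)
  have hDP : Pran (i + 1) (D (i + 1) (Pran i (D i ω))) = D (i + 1) (Pran i (D i ω)) :=
    (hPran (i + 1)).map_id _ ⟨-Dt i v, by rw [← hv]; exact (D_S_eq_S_neg_Dt hanti i v).symm⟩
  rw [twistA_apply, piMap_of_le hi, projS, piMap_of_le (by omega), twistA_apply, hQD, hDQ,
    hST, Prod.mk.injEq]
  refine ⟨by rw [map_sub (Pran i), hPS]; abel, hinj ?_⟩
  calc S (i + 1) (T (i + 1) (D (i + 1) (D i ω - Pran i (D i ω))))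
      = -D (i + 1) (Pran i (D i ω)) := by rw [hST, map_sub, hDD, zero_sub, map_neg, hDP]
    _ = -D (i + 1) (Pran i (D i ω) - S i w) := by rw [map_sub (D (i + 1)), hw, hDD, sub_zero]
    _ = S (i + 1) (Dt i (T i (D i ω - S i w))) := by rw [hanti, hST, map_sub (Pran i), hPS]

theorem piMap_twistA_self (hDD : ∀ i (x : Z i), D (i + 1) (D i x) = 0)
    (hDtDt : ∀ i (x : Zt i), Dt (i + 1) (Dt i x) = 0)
    (hanti : ∀ i (x : Zt i), S (i + 1) (Dt i x) = -D (i + 1) (S i x))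
    (hPran : ∀ i, LinearMap.IsProj (LinearMap.range (S i).toLinearMap) (Pran i))
    (hPker : ∀ i, LinearMap.IsProj (LinearMap.ker (S i).toLinearMap) (Pker i))
    (hTS : ∀ i (x : Zt i), T i (S i x) = x - Pker i x)
    (hST : ∀ i (x : Z (i + 1)), S i (T i x) = Pran i x) {i : ℕ}
    (hinj : Function.Injective (S i)) (hsurj : Function.Surjective (S i)) (y : Z i × Zt i) :
    piMap D Dt Pran Pker T i (i + 1) (twistA D Dt S i y)
      = twistA D Dt S i (piMap D Dt Pran Pker T i i y) := by
  obtain ⟨ω, μ⟩ := y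
  obtain ⟨w, hw, hDtw⟩ := exists_S_eq_D_projS hDtDt hanti hPran i ω
  have hPranId : ∀ x, Pran i x = x := fun x => (hPran i).map_id x (hsurj x)
  have hTS' : ∀ x, T i (S i x) = x := fun x => by
    have hPker0 : Pker i x = 0 :=
      hinj (by rw [map_zero]; exact LinearMap.mem_ker.mp ((hPker i).map_mem x))
    rw [hTS, hPker0, sub_zero]
  have hker : S (i + 1) (Dt i (T i (D i ω))) = 0 := by rw [hanti, hST, hPranId, hDD, neg_zero]
  rw [twistA_apply, piMap_succ_of_lt (Nat.lt_succ_self i), piMap_of_le le_rfl, twistA_apply, hST,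
    hPranId, sub_self, Prod.mk.injEq]
  refine ⟨rfl, ?_⟩
  calc Pker (i + 1) (Dt i μ + Dt i (T i (D i ω - S i μ)))
      = Pker (i + 1) (Dt i (T i (D i ω))) := by rw [map_sub, hTS', map_sub, add_sub_cancel]
    _ = Dt i (T i (D i ω)) := (hPker (i + 1)).map_id _ (LinearMap.mem_ker.mpr hker)
    _ = Dt i (T i (D i (ω - projS Pran i ω))) := by
      rw [map_sub (D i), ← hw, map_sub, hTS', map_sub, hDtw, sub_zero]

theorem piMap_twistA_succ_of_le (hDtDt : ∀ i (x : Zt i), Dt (i + 1) (Dt i x) = 0)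
    (hanti : ∀ i (x : Zt i), S (i + 1) (Dt i x) = -D (i + 1) (S i x))
    (hPran : ∀ i, LinearMap.IsProj (LinearMap.range (S i).toLinearMap) (Pran i))
    (hPker : ∀ i, LinearMap.IsProj (LinearMap.ker (S i).toLinearMap) (Pker i))
    (hTS : ∀ i (x : Zt i), T i (S i x) = x - Pker i x)
    (hST : ∀ i (x : Z (i + 1)), S i (T i x) = Pran i x) {m : ℕ} (hm : J ≤ m)
    (hsurj : Function.Surjective (S m)) (hsurj' : Function.Surjective (S (m + 1)))
    (y : Z (m + 1) × Zt (m + 1)) :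
    piMap D Dt Pran Pker T J (m + 1 + 1) (twistA D Dt S (m + 1) y)
      = twistA D Dt S (m + 1) (piMap D Dt Pran Pker T J (m + 1) y) := by
  obtain ⟨ω, μ⟩ := y
  have hSP : ∀ x, S (m + 1) (Pker (m + 1) x) = 0 := fun x =>
    LinearMap.mem_ker.mp ((hPker (m + 1)).map_mem x)
  have hPT : ∀ z, Pker (m + 1) (T (m + 1) z) = 0 := fun z => by
    obtain ⟨w, rfl⟩ := hsurj' z
    rw [hTS, map_sub, (hPker _).map_id _ ((hPker _).map_mem w), sub_self]
  set k := Dt m (T m ω) + T (m + 1) (D (m + 1) ω) with hk_def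
  have hk : S (m + 1) k = 0 := by
    rw [map_add, hanti, hST, hST, (hPran m).map_id _ (hsurj _),
      (hPran (m + 1)).map_id _ (hsurj' _), neg_add_cancel]
  have hL : Dt (m + 1) μ + Dt (m + 1) (T (m + 1) (D (m + 1) ω - S (m + 1) μ))
      = Dt (m + 1) (Pker (m + 1) μ + k) := by
    simp only [k, map_add, map_sub, hTS, hDtDt]; abel
  have hR : Pker (m + 1) (μ + Dt m (T m ω)) = Pker (m + 1) μ + k := by
    rw [show Dt m (T m ω) = k - T (m + 1) (D (m + 1) ω) by rw [hk_def, add_sub_cancel_right],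
      map_add, map_sub, (hPker _).map_id k (LinearMap.mem_ker.mpr hk), hPT, sub_zero]
  have hker : S (m + 1) (Pker (m + 1) μ + k) = 0 := by rw [map_add, hk, hSP, add_zero]
  rw [twistA_apply, piMap_succ_of_lt (by omega), piMap_succ_of_lt (by omega), twistA_apply,
    map_zero, hSP, sub_zero, hL, hR,
    (hPker _).map_id _ (LinearMap.mem_ker.mpr (S_Dt_eq_zero hanti hker))]

theorem piMap_piMap
    (hPran : ∀ i, LinearMap.IsProj (LinearMap.range (S i).toLinearMap) (Pran i))
    (hPker : ∀ i, LinearMap.IsProj (LinearMap.ker (S i).toLinearMap) (Pker i)) (i : ℕ)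
    (y : Z i × Zt i) :
    piMap D Dt Pran Pker T J i (piMap D Dt Pran Pker T J i y) = piMap D Dt Pran Pker T J i y := by
  obtain ⟨ω, μ⟩ := y
  by_cases hi : i ≤ J
  · rw [piMap_of_le hi, piMap_of_le hi, projS_sub_projS hPran, sub_zero]
  · obtain ⟨m, rfl⟩ := Nat.exists_eq_add_one_of_ne_zero (by omega : i ≠ 0)
    rw [piMap_succ_of_lt (by omega), piMap_succ_of_lt (by omega), map_zero, map_zero, add_zero,
      (hPker _).map_id _ ((hPker _).map_mem _)]

end TwistedComplex

theorem stmt_9_general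
    (n J : ℕ)
    {Z Zt : ℕ → Type*}
    [∀ i, NormedAddCommGroup (Z i)] [∀ i, InnerProductSpace ℝ (Z i)]
    [∀ i, NormedAddCommGroup (Zt i)] [∀ i, InnerProductSpace ℝ (Zt i)]
    (D : ∀ i, Z i →L[ℝ] Z (i + 1)) (Dt : ∀ i, Zt i →L[ℝ] Zt (i + 1))
    (S : ∀ i, Zt i →L[ℝ] Z (i + 1))
    (Pran : ∀ i, Z (i + 1) →L[ℝ] Z (i + 1)) (Pker : ∀ i, Zt i →L[ℝ] Zt i)
    (T : ∀ i, Z (i + 1) →L[ℝ] Zt i)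
    (hDD : ∀ i (x : Z i), D (i + 1) (D i x) = 0)
    (hDtDt : ∀ i (x : Zt i), Dt (i + 1) (Dt i x) = 0)
    (hanti : ∀ i (x : Zt i), S (i + 1) (Dt i x) = -D (i + 1) (S i x))
    (hSinj : ∀ i, i ≤ J → Function.Injective (S i))
    (hSsurj : ∀ i, J ≤ i → i + 1 ≤ n → Function.Surjective (S i))
    (hPranMem : ∀ i (x : Z (i + 1)), Pran i x ∈ LinearMap.range (S i : Zt i →ₗ[ℝ] Z (i + 1)))
    (hPranOrth : ∀ i (x : Z (i + 1)), x - Pran i x ∈ (LinearMap.range (S i : Zt i →ₗ[ℝ] Z (i + 1)))ᗮ)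
    (hPkerMem : ∀ i (x : Zt i), Pker i x ∈ LinearMap.ker (S i : Zt i →ₗ[ℝ] Z (i + 1)))
    (hPkerOrth : ∀ i (x : Zt i), x - Pker i x ∈ (LinearMap.ker (S i : Zt i →ₗ[ℝ] Z (i + 1)))ᗮ)
    (hTS : ∀ i (x : Zt i), T i (S i x) = x - Pker i x)
    (hST : ∀ i (x : Z (i + 1)), S i (T i x) = Pran i x) :
    -- `Π` is a cochain map:
    (∀ i, i + 1 ≤ n → ∀ y : Z i × Zt i,
      piMap D Dt Pran Pker T J (i + 1) (twistA D Dt S i y)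
        = twistA D Dt S i (piMap D Dt Pran Pker T J i y)) ∧
    -- `Π` is a projection:
    (∀ i, i ≤ n → ∀ y : Z i × Zt i,
      piMap D Dt Pran Pker T J i (piMap D Dt Pran Pker T J i y)
        = piMap D Dt Pran Pker T J i y) := by
  have hPran i := LinearMap.isProj_of_sub_mem_orthogonal (hPranMem i) (hPranOrth i)
  have hPker i := LinearMap.isProj_of_sub_mem_orthogonal (hPkerMem i) (hPkerOrth i)
  refine ⟨fun i hi y => ?_, fun i _ y => piMap_piMap hPran hPker i y⟩
  obtain hlt | rfl | hgt := lt_trichotomy i J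
  · exact piMap_twistA_of_succ_le hDD hDtDt hanti hPran hST (hSinj _ hlt) hlt y
  · exact piMap_twistA_self hDD hDtDt hanti hPran hPker hTS hST (hSinj i le_rfl)
      (hSsurj i le_rfl hi) y
  · obtain ⟨m, rfl⟩ := Nat.exists_eq_add_one_of_ne_zero (by omega : i ≠ 0)
    exact piMap_twistA_succ_of_le hDtDt hanti hPran hPker hTS hST (by omega) (hSsurj m (by omega)
      (by omega)) (hSsurj (m + 1) (by omega) hi) y

theorem stmt_9
    (n J : ℕ) (hn : 1 ≤ n) (hJn : J + 1 ≤ n)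
    {Z Zt : ℕ → Type*}
    [∀ i, NormedAddCommGroup (Z i)] [∀ i, InnerProductSpace ℝ (Z i)] [∀ i, CompleteSpace (Z i)]
    [∀ i, NormedAddCommGroup (Zt i)] [∀ i, InnerProductSpace ℝ (Zt i)] [∀ i, CompleteSpace (Zt i)]
    (D : ∀ i, Z i →L[ℝ] Z (i + 1)) (Dt : ∀ i, Zt i →L[ℝ] Zt (i + 1))
    (S : ∀ i, Zt i →L[ℝ] Z (i + 1))
    (Pran : ∀ i, Z (i + 1) →L[ℝ] Z (i + 1)) (Pker : ∀ i, Zt i →L[ℝ] Zt i)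
    (T : ∀ i, Z (i + 1) →L[ℝ] Zt i)
    (hDD : ∀ i (x : Z i), D (i + 1) (D i x) = 0)
    (hDtDt : ∀ i (x : Zt i), Dt (i + 1) (Dt i x) = 0)
    (hDtop : ∀ i, n ≤ i → D i = 0) (hDttop : ∀ i, n ≤ i → Dt i = 0)
    (hStop : ∀ i, n ≤ i → S i = 0)
    (hanti : ∀ i (x : Zt i), S (i + 1) (Dt i x) = -D (i + 1) (S i x))
    (hScl : ∀ i, IsClosed ((LinearMap.range (S i : Zt i →ₗ[ℝ] Z (i + 1)) : Submodule ℝ (Z (i + 1))) : Set (Z (i + 1))))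
    (hSinj : ∀ i, i ≤ J → Function.Injective (S i))
    (hSsurj : ∀ i, J ≤ i → i + 1 ≤ n → Function.Surjective (S i))
    (hPranMem : ∀ i (x : Z (i + 1)), Pran i x ∈ LinearMap.range (S i : Zt i →ₗ[ℝ] Z (i + 1)))
    (hPranOrth : ∀ i (x : Z (i + 1)), x - Pran i x ∈ (LinearMap.range (S i : Zt i →ₗ[ℝ] Z (i + 1)))ᗮ)
    (hPkerMem : ∀ i (x : Zt i), Pker i x ∈ LinearMap.ker (S i : Zt i →ₗ[ℝ] Z (i + 1)))
    (hPkerOrth : ∀ i (x : Zt i), x - Pker i x ∈ (LinearMap.ker (S i : Zt i →ₗ[ℝ] Z (i + 1)))ᗮ)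
    (hTzero : ∀ i, ∀ x ∈ (LinearMap.range (S i : Zt i →ₗ[ℝ] Z (i + 1)))ᗮ, T i x = 0)
    (hTS : ∀ i (x : Zt i), T i (S i x) = x - Pker i x)
    (hST : ∀ i (x : Z (i + 1)), S i (T i x) = Pran i x) :
    -- `Π` is a cochain map:
    (∀ i, i + 1 ≤ n → ∀ y : Z i × Zt i,
      piMap D Dt Pran Pker T J (i + 1) (twistA D Dt S i y)
        = twistA D Dt S i (piMap D Dt Pran Pker T J i y)) ∧
    -- `Π` is a projection:
    (∀ i, i ≤ n → ∀ y : Z i × Zt i,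
      piMap D Dt Pran Pker T J i (piMap D Dt Pran Pker T J i y)
        = piMap D Dt Pran Pker T J i y) :=
  stmt_9_general n J D Dt S Pran Pker T hDD hDtDt hanti hSinj hSsurj hPranMem hPranOrth hPkerMem
    hPkerOrth hTS hST

end
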